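/- Let ζ generate F_q^*, and for a monic irreducible polynomial φ over F_q with φ(0) ≠ 0 let r(φ) ∈ ℤ/(q-1) satisfy ζ^{r(φ)} = (-1)^{deg φ} φ(0). Let ω be a (q-1)-st root of unity in ℂ with ω ≠ 1. Then the formal power series ∏_φ (1 + ω^{r(φ)} u^{deg φ}) (product over monic irreducibles φ with φ(0) ≠ 0) equals 1 if ω ≠ -1, and equals (1 - qu^2)/(1 - u^2) if ω = -1. -/

import Mathlib

/-!
Let `χ` be the multiplicative character of `F_q` with `χ ζ = ω`, extended to polynomials by
`λ f = χ ((-1) ^ deg f * f(0))`. Then `λ` is completely multiplicative, `ω ^ r(φ) = λ φ`, and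
`λ X = 0`, so the product may run over all monic irreducibles. Unique factorisation gives the
Euler product `∏_φ (1 - λ φ u ^ deg φ)⁻¹ = ∑_f λ f u ^ deg f =: L_χ(u)` over monic `f`; as `f(0)`
is equidistributed among the monic polynomials of degree `m ≥ 1`, the coefficient of `u ^ m` is
`χ(-1) ^ m q ^ (m - 1) ∑_a χ a`, so `L_χ = 1` for `χ ≠ 1` and `L_1(u) = (1 - u) / (1 - q u)`.
Hence `∏_φ (1 + λ φ u ^ deg φ) = L_χ(u) / L_{χ²}(u²)`, which is `1` if `χ² ≠ 1`, i.e. `ω ≠ -1`,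
and `(1 - q u²) / (1 - u²)` if `χ² = 1`.

Everything is computed modulo `u ^ (n + 1)`, that is, in a ring where `u ^ (n + 1) = 0`: there
all series become finite sums and factors of degree `> n` can be dropped.
-/

namespace Polynomial

section MonicOfDegree

variable (R : Type*) [Ring R] [Fintype R]

noncomputable def monicOfDegree (m : ℕ) : Finset R[X] :=
  Finset.univ.map ⟨fun v => X ^ m + ((degreeLTEquiv R m).symm v : R[X]),
    (add_right_injective _).comp <| Subtype.val_injective.comp (degreeLTEquiv R m).symm.injective⟩

variable {R}

theorem mem_monicOfDegree [Nontrivial R] {m : ℕ} {f : R[X]} :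
    f ∈ monicOfDegree R m ↔ f.Monic ∧ f.natDegree = m := by
  simp only [monicOfDegree, Finset.mem_map, Finset.mem_univ, true_and,
    Function.Embedding.coeFn_mk]
  constructor
  · rintro ⟨v, rfl⟩
    have hlt := mem_degreeLT.mp ((degreeLTEquiv R m).symm v).2
    refine ⟨monic_X_pow_add hlt, ?_⟩
    rw [natDegree_add_eq_left_of_degree_lt (by rwa [degree_X_pow]), natDegree_X_pow]
  · rintro ⟨hmon, rfl⟩
    have hdeg : f.degree = f.natDegree := degree_eq_natDegree hmon.ne_zero
    have hlt : (f - X ^ f.natDegree).degree < (f.natDegree : WithBot ℕ) := hdeg ▸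
      degree_sub_lt_left (by rw [hdeg, degree_X_pow]) hmon.ne_zero
        (by rw [hmon, (monic_X_pow _).leadingCoeff])
    exact ⟨degreeLTEquiv R _ ⟨_, mem_degreeLT.mpr hlt⟩, by simp⟩

theorem monicOfDegree_zero [Nontrivial R] : monicOfDegree R 0 = {1} := by
  ext f
  rw [mem_monicOfDegree, Finset.mem_singleton]
  exact ⟨fun ⟨hmon, hdeg⟩ => hmon.natDegree_eq_zero.mp hdeg,
    fun h => h ▸ ⟨monic_one, natDegree_one⟩⟩

theorem sum_monicOfDegree_comp_coeff_zero {M : Type*} [AddCommMonoid M] {m : ℕ} (hm : m ≠ 0)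
    (g : R → M) :
    ∑ f ∈ monicOfDegree R m, g (f.coeff 0) = Fintype.card R ^ (m - 1) • ∑ a, g a := by
  obtain ⟨k, rfl⟩ := Nat.exists_eq_succ_of_ne_zero hm
  have hcoeff (v : Fin (k + 1) → R) :
      (X ^ (k + 1) + ((degreeLTEquiv R (k + 1)).symm v : R[X])).coeff 0 = v 0 := by
    rw [coeff_add, coeff_X_pow, if_neg k.succ_ne_zero.symm, zero_add]
    exact congrFun ((degreeLTEquiv R (k + 1)).apply_symm_apply v) 0
  rw [monicOfDegree, Finset.sum_map]
  simp only [Function.Embedding.coeFn_mk, hcoeff]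
  rw [← (Fin.consEquiv fun _ => R).sum_comp, Fintype.sum_prod_type]
  simp [Finset.smul_sum]

end MonicOfDegree

section SignedConstantCoeff

variable {R : Type*} [CommRing R] [NoZeroDivisors R]

/-- For monic `f` this is the product of the roots of `f` in a splitting field. -/
def signedConstantCoeff : R[X] →* R where
  toFun f := (-1) ^ f.natDegree * f.coeff 0
  map_one' := by simp
  map_mul' f g := by
    rcases eq_or_ne f 0 with rfl | hf
    · simp
    rcases eq_or_ne g 0 with rfl | hg
    · simp
    rw [natDegree_mul hf hg, mul_coeff_zero, pow_add]
    ring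

end SignedConstantCoeff

theorem natDegree_prod_pow_of_monic {R ι : Type*} [CommSemiring R] [Fintype ι] {p : ι → R[X]}
    (hp : ∀ i, (p i).Monic) (e : ι → ℕ) :
    (∏ i, p i ^ e i).natDegree = ∑ i, e i * (p i).natDegree := by
  rw [natDegree_prod_of_monic _ _ fun i _ => (hp i).pow _]
  exact Finset.sum_congr rfl fun i _ => (hp i).natDegree_pow _

theorem prod_sum_range_pow_eq_sum_piFinset {R A : Type*} [CommSemiring R] [CommSemiring A]
    [DecidableEq R[X]] (L : R[X] →* A) (u : A) (K : ℕ) {S : Finset R[X]}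
    (hS : ∀ φ ∈ S, φ.Monic) :
    ∏ φ ∈ S, ∑ k ∈ Finset.range K, (L φ * u ^ φ.natDegree) ^ k =
      ∑ e ∈ Fintype.piFinset fun _ : S => Finset.range K,
        L (∏ φ : S, (φ : R[X]) ^ e φ) * u ^ (∏ φ : S, (φ : R[X]) ^ e φ).natDegree := by
  rw [← Finset.prod_coe_sort, Finset.prod_univ_sum]
  refine Finset.sum_congr rfl fun e _ => ?_
  simp only [natDegree_prod_pow_of_monic (fun φ : S => hS φ φ.2), map_prod, map_pow,
    ← Finset.prod_pow_eq_pow_sum, mul_pow, Finset.prod_mul_distrib, ← pow_mul, mul_comm]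

end Polynomial

namespace UniqueFactorizationMonoid

theorem count_normalizedFactors_prod_pow {α ι : Type*} [CommMonoidWithZero α]
    [NormalizationMonoid α] [UniqueFactorizationMonoid α] [DecidableEq α] [Fintype ι]
    {p : ι → α} (hp : Function.Injective p) (hirr : ∀ i, Irreducible (p i))
    (hnorm : ∀ i, normalize (p i) = p i) (e : ι → ℕ) (i : ι) :
    (normalizedFactors (∏ j, p j ^ e j)).count (p i) = e i := by
  classical
  have hfac : normalizedFactors (∏ j, p j ^ e j) = ∑ j, Multiset.replicate (e j) (p j) := by
    rw [Finset.prod_eq_multiset_prod, normalizedFactors_multiset_prod]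
    · rw [Multiset.map_map]
      simp only [Function.comp_def, normalizedFactors_of_irreducible_pow (hirr _), hnorm]
      rfl
    · simpa using fun j => pow_ne_zero _ (hirr j).ne_zero
  simp [hfac, Multiset.count_sum', Multiset.count_replicate, hp.eq_iff]

end UniqueFactorizationMonoid

namespace Polynomial

open UniqueFactorizationMonoid

variable {F : Type*} [Field F] [Fintype F]

variable (F) in
open Classical in
noncomputable def monicIrreducibleOfDegreeLE (N : ℕ) : Finset F[X] :=
  (Finset.Icc 1 N).biUnion fun d => {f ∈ monicOfDegree F d | Irreducible f}

theorem mem_monicIrreducibleOfDegreeLE {N : ℕ} {f : F[X]} :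
    f ∈ monicIrreducibleOfDegreeLE F N ↔ f.Monic ∧ Irreducible f ∧ f.natDegree ≤ N := by
  simp only [monicIrreducibleOfDegreeLE, Finset.mem_biUnion, Finset.mem_filter,
    mem_monicOfDegree, Finset.mem_Icc]
  constructor
  · rintro ⟨d, ⟨-, hd⟩, ⟨hmon, rfl⟩, hirr⟩
    exact ⟨hmon, hirr, hd⟩
  · rintro ⟨hmon, hirr, hN⟩
    exact ⟨_, ⟨hirr.natDegree_pos, hN⟩, ⟨hmon, rfl⟩, hirr⟩

theorem exists_prod_monicIrreducibleOfDegreeLE_pow_eq {N : ℕ} {f : F[X]} (hf : f.Monic)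
    (hN : f.natDegree ≤ N) :
    ∃ e : F[X] → ℕ, ∏ φ ∈ monicIrreducibleOfDegreeLE F N, φ ^ e φ = f := by
  classical
  refine ⟨fun φ => (normalizedFactors f).count φ, ?_⟩
  have hsub : (normalizedFactors f).toFinset ⊆ monicIrreducibleOfDegreeLE F N := by
    intro φ hφ
    rw [Multiset.mem_toFinset] at hφ
    have hirr := irreducible_of_normalized_factor φ hφ
    refine mem_monicIrreducibleOfDegreeLE.mpr ⟨?_, hirr, ?_⟩
    · simpa [normalize_normalized_factor φ hφ] using monic_normalize hirr.ne_zero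
    · exact (natDegree_le_of_dvd (dvd_of_mem_normalizedFactors hφ) hf.ne_zero).trans hN
  have hprod := prod_normalizedFactors hf.ne_zero
  rw [Finset.prod_multiset_count, Finset.prod_subset hsub fun φ _ hφ => by
    rw [Multiset.count_eq_zero_of_notMem (mt Multiset.mem_toFinset.mpr hφ), pow_zero]] at hprod
  exact eq_of_monic_of_associated
    (monic_prod_of_monic _ _ fun φ hφ => (mem_monicIrreducibleOfDegreeLE.mp hφ).1.pow _) hf hprod

variable {A : Type*} [CommRing A]

noncomputable def truncLSeries (L : F[X] →* A) (u : A) (N : ℕ) : A :=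
  ∑ m ∈ Finset.range (N + 1), (∑ f ∈ monicOfDegree F m, L f) * u ^ m

open Classical in
theorem truncLSeries_eq_sum (L : F[X] →* A) (u : A) (N : ℕ) :
    truncLSeries L u N =
      ∑ f ∈ (Finset.range (N + 1)).biUnion (monicOfDegree F), L f * u ^ f.natDegree := by
  rw [truncLSeries, Finset.sum_biUnion]
  · refine Finset.sum_congr rfl fun m _ => ?_
    rw [Finset.sum_mul]
    exact Finset.sum_congr rfl fun f hf => by rw [(mem_monicOfDegree.mp hf).2]
  · intro m _ m' _ hne
    refine Finset.disjoint_left.mpr fun f hf hf' => hne ?_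
    rw [← (mem_monicOfDegree.mp hf).2, (mem_monicOfDegree.mp hf').2]

theorem prod_sum_range_pow_eq_truncLSeries (L : F[X] →* A) {u : A} {N : ℕ}
    (hu : u ^ (N + 1) = 0) :
    ∏ φ ∈ monicIrreducibleOfDegreeLE F N, ∑ k ∈ Finset.range (N + 1),
      (L φ * u ^ φ.natDegree) ^ k = truncLSeries L u N := by
  classical
  set S := monicIrreducibleOfDegreeLE F N
  have hmon (φ : S) : (φ : F[X]).Monic := (mem_monicIrreducibleOfDegreeLE.mp φ.2).1
  have hirr (φ : S) : Irreducible (φ : F[X]) := (mem_monicIrreducibleOfDegreeLE.mp φ.2).2.1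
  set P : (S → ℕ) → F[X] := fun e => ∏ φ : S, (φ : F[X]) ^ e φ
  rw [prod_sum_range_pow_eq_sum_piFinset L u _ fun φ hφ => (mem_monicIrreducibleOfDegreeLE.mp hφ).1,
    truncLSeries_eq_sum, ← Finset.sum_filter_of_ne (p := fun e => (P e).natDegree ≤ N)]
  · -- unique factorisation: `P` is a bijection onto the monic polynomials of degree `≤ N`
    refine Finset.sum_nbij P (fun e he => ?_) (fun e _ e' _ h => ?_) (fun f hf => ?_)
      fun _ _ => rfl
    · exact Finset.mem_biUnion.mpr ⟨_, Finset.mem_range.mpr (Nat.lt_succ_of_le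
        (Finset.mem_filter.mp he).2), mem_monicOfDegree.mpr ⟨monic_prod_of_monic _ _
          fun φ _ => (hmon φ).pow _, rfl⟩⟩
    · funext φ
      rw [← count_normalizedFactors_prod_pow Subtype.val_injective hirr
        (fun φ => (hmon φ).normalize_eq_self) e φ, ← count_normalizedFactors_prod_pow
          Subtype.val_injective hirr (fun φ => (hmon φ).normalize_eq_self) e' φ]
      exact congrArg _ (congrArg _ h)
    · obtain ⟨m, hm, hfm⟩ := Finset.mem_biUnion.mp hf
      obtain ⟨hfmon, rfl⟩ := mem_monicOfDegree.mp hfm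
      have hfN := Nat.lt_succ_iff.mp (Finset.mem_range.mp hm)
      obtain ⟨e, he⟩ := exists_prod_monicIrreducibleOfDegreeLE_pow_eq hfmon hfN
      have hPe : P (fun φ => e φ) = f := by rw [← he, ← Finset.prod_coe_sort]
      refine ⟨fun φ => e φ, Finset.mem_filter.mpr ⟨Fintype.mem_piFinset.mpr fun φ => ?_,
        hPe ▸ hfN⟩, hPe⟩
      have hle : e φ * (φ : F[X]).natDegree ≤ f.natDegree := by
        rw [← hPe, natDegree_prod_pow_of_monic hmon]
        exact Finset.single_le_sum (f := fun ψ : S => e ψ * (ψ : F[X]).natDegree)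
          (fun _ _ => Nat.zero_le _) (Finset.mem_univ φ)
      exact Finset.mem_range.mpr (Nat.lt_succ_of_le
        (((Nat.le_mul_of_pos_right _ (hirr φ).natDegree_pos).trans hle).trans hfN))
  · intro e _ hne
    by_contra hlt
    exact hne (by rw [pow_eq_zero_of_le (not_le.mp hlt) hu, mul_zero])

theorem prod_one_sub_mul_truncLSeries (L : F[X] →* A) {u : A} {N : ℕ} (hu : u ^ (N + 1) = 0) :
    (∏ φ ∈ monicIrreducibleOfDegreeLE F N, (1 - L φ * u ^ φ.natDegree)) *
      truncLSeries L u N = 1 := by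
  rw [← prod_sum_range_pow_eq_truncLSeries L hu, ← Finset.prod_mul_distrib]
  refine Finset.prod_eq_one fun φ hφ => ?_
  have hdeg := (mem_monicIrreducibleOfDegreeLE.mp hφ).2.1.natDegree_pos
  rw [mul_neg_geom_sum, mul_pow, ← pow_mul,
    pow_eq_zero_of_le (Nat.le_mul_of_pos_left _ hdeg) hu, mul_zero, sub_zero]

end Polynomial

namespace MulChar

open Polynomial

section PolyChar

variable {F : Type*} [Field F] {K : Type*} [CommRing K]

noncomputable def polyChar (χ : MulChar F K) : F[X] →* K :=
  χ.toMonoidHom.comp signedConstantCoeff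

theorem polyChar_apply (χ : MulChar F K) (f : F[X]) :
    χ.polyChar f = χ ((-1) ^ f.natDegree * f.coeff 0) :=
  rfl

theorem polyChar_pow (χ : MulChar F K) {n : ℕ} (hn : n ≠ 0) (f : F[X]) :
    (χ ^ n).polyChar f = χ.polyChar f ^ n :=
  pow_apply' χ hn _

variable [Fintype F]

theorem sum_monicOfDegree_polyChar (χ : MulChar F K) {m : ℕ} (hm : m ≠ 0) :
    ∑ f ∈ monicOfDegree F m, χ.polyChar f =
      χ (-1) ^ m * (Fintype.card F ^ (m - 1) * ∑ a, χ a) := by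
  have h (f) (hf : f ∈ monicOfDegree F m) : χ.polyChar f = χ (-1) ^ m * χ (f.coeff 0) := by
    rw [polyChar_apply, (mem_monicOfDegree.mp hf).2, map_mul, map_pow]
  rw [Finset.sum_congr rfl h, ← Finset.mul_sum, sum_monicOfDegree_comp_coeff_zero hm, nsmul_eq_mul]
  push_cast
  rfl

variable {A : Type*} [CommRing A] (ι : K →+* A)

theorem truncLSeries_eq_one [IsDomain K] {χ : MulChar F K} (hχ : χ ≠ 1) (u : A) (N : ℕ) :
    truncLSeries ((ι : K →* A).comp χ.polyChar) u N = 1 := by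
  rw [truncLSeries, Finset.sum_range_succ', Finset.sum_eq_zero fun m _ => ?_]
  · simp [monicOfDegree_zero]
  · simp only [MonoidHom.coe_comp, Function.comp_apply, MonoidHom.coe_coe, ← map_sum,
      sum_monicOfDegree_polyChar χ m.succ_ne_zero, sum_eq_zero_of_ne_one hχ]
    simp

theorem prod_one_add_mul_prod_one_sub (χ : MulChar F K) (u : A) (N : ℕ) :
    (∏ φ ∈ monicIrreducibleOfDegreeLE F N, (1 + ι (χ.polyChar φ) * u ^ φ.natDegree)) *
        ∏ φ ∈ monicIrreducibleOfDegreeLE F N, (1 - ι (χ.polyChar φ) * u ^ φ.natDegree) =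
      ∏ φ ∈ monicIrreducibleOfDegreeLE F N,
        (1 - ι ((χ ^ 2).polyChar φ) * (u ^ 2) ^ φ.natDegree) := by
  rw [← Finset.prod_mul_distrib]
  refine Finset.prod_congr rfl fun φ _ => ?_
  rw [polyChar_pow χ two_ne_zero, map_pow]
  ring

theorem one_sub_mul_truncLSeries_one {u : A} {N : ℕ} (hu : u ^ (N + 1) = 0) :
    (1 - Fintype.card F * u) * truncLSeries ((ι : K →* A).comp (1 : MulChar F K).polyChar) u N =
      1 - u := by
  classical
  set q : A := (Fintype.card F : A)
  have hcoeff (m : ℕ) :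
      ∑ f ∈ monicOfDegree F (m + 1), ι ((1 : MulChar F K).polyChar f) = (q - 1) * q ^ m := by
    simp only [← map_sum, sum_monicOfDegree_polyChar _ m.succ_ne_zero, sum_one_eq_card_units,
      Fintype.card_units, one_apply isUnit_one.neg]
    rw [Nat.cast_sub Fintype.card_pos]
    simp only [Nat.succ_eq_add_one, one_pow, add_tsub_cancel_right, zero_add, Nat.cast_one,
      one_mul, map_mul, map_pow, map_natCast, map_sub, map_one, q]
    ring
  have hL : truncLSeries ((ι : K →* A).comp (1 : MulChar F K).polyChar) u N =
      1 + (q - 1) * u * ∑ m ∈ Finset.range N, (q * u) ^ m := by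
    rw [truncLSeries, Finset.sum_range_succ', Finset.mul_sum, add_comm]
    simp only [monicOfDegree_zero, MonoidHom.coe_comp, Function.comp_apply, MonoidHom.coe_coe,
      hcoeff, Finset.sum_singleton, map_one, one_mul, pow_zero]
    refine congrArg _ (Finset.sum_congr rfl fun m _ => ?_)
    ring
  rw [hL]
  linear_combination (q - 1) * u * mul_neg_geom_sum (q * u) N - (q - 1) * q ^ N * hu

end PolyChar

section Generator

variable {F : Type*} [Field F] {K : Type*} [CommMonoidWithZero K] {ζ : F}

theorem eq_one_iff_apply_eq_one (hζ : ∀ x : F, x ≠ 0 → ∃ k : ℕ, ζ ^ k = x) (hζ0 : ζ ≠ 0)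
    (χ : MulChar F K) : χ = 1 ↔ χ ζ = 1 := by
  refine ⟨fun h => h ▸ one_apply (isUnit_iff_ne_zero.mpr hζ0), fun h => ext fun a => ?_⟩
  obtain ⟨k, hk⟩ := hζ a a.ne_zero
  rw [one_apply_coe, ← hk, map_pow, h, one_pow]

theorem exists_apply_eq [Fintype F] (hζ : ∀ x : F, x ≠ 0 → ∃ k : ℕ, ζ ^ k = x) (hζ0 : ζ ≠ 0)
    {ω : K} (hω : ω ^ (Fintype.card F - 1) = 1) : ∃ χ : MulChar F K, χ ζ = ω := by
  classical
  have hn : Fintype.card F - 1 ≠ 0 := by have := Fintype.one_lt_card (α := F); omega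
  have hg (x : Fˣ) : x ∈ Subgroup.zpowers (Units.mk0 ζ hζ0) := by
    obtain ⟨k, hk⟩ := hζ x x.ne_zero
    exact ⟨k, Units.ext (by simp [hk])⟩
  have hmem : Units.ofPowEqOne ω _ hω hn ∈ rootsOfUnity (Fintype.card Fˣ) K := by
    rw [Fintype.card_units, mem_rootsOfUnity]
    exact Units.pow_ofPowEqOne hω hn
  exact ⟨ofRootOfUnity hmem hg, by simpa using ofRootOfUnity_spec hmem hg⟩

end Generator

section Products

variable {F : Type*} [Field F] [Fintype F] {K : Type*} [CommRing K] [IsDomain K]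
  {A : Type*} [CommRing A] (ι : K →+* A) {u : A} {N : ℕ}

theorem prod_one_sub_polyChar_eq_one {χ : MulChar F K} (hχ : χ ≠ 1) (hu : u ^ (N + 1) = 0) :
    ∏ φ ∈ monicIrreducibleOfDegreeLE F N, (1 - ι (χ.polyChar φ) * u ^ φ.natDegree) = 1 := by
  simpa [truncLSeries_eq_one ι hχ] using
    prod_one_sub_mul_truncLSeries ((ι : K →* A).comp χ.polyChar) hu

theorem prod_one_add_polyChar_eq_one {χ : MulChar F K} (hχ : χ ^ 2 ≠ 1) (hu : u ^ (N + 1) = 0) :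
    ∏ φ ∈ monicIrreducibleOfDegreeLE F N, (1 + ι (χ.polyChar φ) * u ^ φ.natDegree) = 1 := by
  have hχ1 : χ ≠ 1 := fun h => hχ (by rw [h, one_pow])
  have hu2 : (u ^ 2) ^ (N + 1) = 0 := by rw [← pow_mul, pow_eq_zero_of_le (by omega) hu]
  have hpair := prod_one_add_mul_prod_one_sub ι χ u N
  rwa [prod_one_sub_polyChar_eq_one ι hχ1 hu, mul_one, prod_one_sub_polyChar_eq_one ι hχ hu2]
    at hpair

theorem prod_one_add_polyChar_mul_one_sub_sq {χ : MulChar F K} (hχ : χ ≠ 1) (hχ2 : χ ^ 2 = 1)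
    (hu : u ^ (N + 1) = 0) :
    (∏ φ ∈ monicIrreducibleOfDegreeLE F N, (1 + ι (χ.polyChar φ) * u ^ φ.natDegree)) *
      (1 - u ^ 2) = 1 - Fintype.card F * u ^ 2 := by
  have hu2 : (u ^ 2) ^ (N + 1) = 0 := by rw [← pow_mul, pow_eq_zero_of_le (by omega) hu]
  have hpair := prod_one_add_mul_prod_one_sub ι χ u N
  rw [prod_one_sub_polyChar_eq_one ι hχ hu, mul_one, hχ2] at hpair
  have heuler := prod_one_sub_mul_truncLSeries ((ι : K →* A).comp (1 : MulChar F K).polyChar) hu2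
  simp only [MonoidHom.coe_comp, Function.comp_apply, MonoidHom.coe_coe] at heuler
  rw [hpair]
  -- `P (1 - u²) = P (1 - q u²) L₁(u²) = 1 - q u²`, where `P L₁(u²) = 1` is `heuler`
  linear_combination (-∏ φ ∈ monicIrreducibleOfDegreeLE F N,
      (1 - ι ((1 : MulChar F K).polyChar φ) * (u ^ 2) ^ φ.natDegree)) *
    one_sub_mul_truncLSeries_one (F := F) ι hu2 + (1 - Fintype.card F * u ^ 2) * heuler

end Products

end MulChar

namespace Polynomial

theorem prod_Icc_finprod_eq_prod_monicIrreducibleOfDegreeLE {F : Type*} [Field F] [Fintype F]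
    {R : Type*} [CommSemiring R] (c L : F[X] → R)
    (hc : ∀ p : F[X], p.Monic → Irreducible p → p.coeff 0 ≠ 0 → c p = L p)
    (hL : ∀ p : F[X], p.coeff 0 = 0 → L p = 0) (n : ℕ) :
    ∏ d ∈ Finset.Icc 1 n, ∏ᶠ p ∈ {p : F[X] | p.Monic ∧ Irreducible p ∧ p.natDegree = d ∧
        p.coeff 0 ≠ 0}, (1 + PowerSeries.C (c p) * PowerSeries.X ^ d) =
      ∏ φ ∈ monicIrreducibleOfDegreeLE F n,
        (1 + PowerSeries.C (L φ) * PowerSeries.X ^ φ.natDegree) := by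
  classical
  rw [monicIrreducibleOfDegreeLE, Finset.prod_biUnion]
  · refine Finset.prod_congr rfl fun d _ => ?_
    have hset : {p : F[X] | p.Monic ∧ Irreducible p ∧ p.natDegree = d ∧ p.coeff 0 ≠ 0} =
        ↑{p ∈ {p ∈ monicOfDegree F d | Irreducible p} | p.coeff 0 ≠ 0} := by
      ext p
      simp [mem_monicOfDegree, and_assoc, and_left_comm]
    rw [hset, finprod_mem_coe_finset]
    refine (Finset.prod_congr rfl fun p hp => ?_).trans (Finset.prod_filter_of_ne fun p _ hne => ?_)
    · simp only [Finset.mem_filter, mem_monicOfDegree] at hp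
      obtain ⟨⟨⟨hmon, rfl⟩, hirr⟩, h0⟩ := hp
      rw [hc p hmon hirr h0]
    · contrapose! hne
      simp [hL p hne]
  · intro d _ d' _ hne
    refine Finset.disjoint_left.mpr fun f hf hf' => hne ?_
    rw [← (mem_monicOfDegree.mp (Finset.mem_filter.mp hf).1).2,
      (mem_monicOfDegree.mp (Finset.mem_filter.mp hf').1).2]

end Polynomial

theorem ne_zero_of_forall_eq_pow {F : Type*} [Field F] [Fintype F] {ζ : F}
    (hζ : ∀ x : F, x ≠ 0 → ∃ k : ℕ, ζ ^ k = x) (hF : 2 < Fintype.card F) : ζ ≠ 0 := by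
  classical
  rintro rfl
  have hsub : (Finset.univ : Finset F) ⊆ {0, 1} := by
    intro x _
    by_cases hx : x = 0
    · simp [hx]
    obtain ⟨_ | k, hk⟩ := hζ x hx
    · simp [← hk]
    · simp [← hk] at hx
  have := (Finset.card_le_card hsub).trans Finset.card_le_two
  rw [Finset.card_univ] at this
  omega

theorem PowerSeries.coeff_eq_of_mk_eq {R : Type*} [CommRing R] {n : ℕ} {f g : PowerSeries R}
    (h : Ideal.Quotient.mk (Ideal.span {X ^ (n + 1)}) f = Ideal.Quotient.mk _ g) :
    coeff n f = coeff n g := by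
  rw [Ideal.Quotient.eq, Ideal.mem_span_singleton, X_pow_dvd_iff] at h
  simpa [sub_eq_zero] using h n n.lt_succ_self

open PowerSeries in
/-- Britnell's identity: with `ζ` a generator of `F_q^*`, `r φ ∈ ℤ/(q-1)` defined by
`ζ^{r φ} = (-1)^{deg φ} φ(0)`, and `ω ≠ 1` a `(q-1)`-st root of unity in `ℂ`,
the product `∏_φ (1 + ω^{r φ} u^{deg φ})` over monic irreducible polynomials `φ`
with `φ(0) ≠ 0` equals `1` if `ω ≠ -1` and `(1-qu²)/(1-u²)` if `ω = -1`.
The identity is stated coefficientwise, truncating the product at degrees `≤ n`. -/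
theorem britnell_identity (q : ℕ) (F : Type*) [Field F] [Fintype F]
    (hq : Fintype.card F = q)
    (ζ : F) (hζ : ∀ x : F, x ≠ 0 → ∃ k : ℕ, ζ ^ k = x)
    (r : Polynomial F → ZMod (q - 1))
    (hr : ∀ p : Polynomial F, p.Monic → Irreducible p → p.coeff 0 ≠ 0 →
      ζ ^ (r p).val = (-1) ^ p.natDegree * p.coeff 0)
    (ω : ℂ) (hω : ω ^ (q - 1) = 1) (hω1 : ω ≠ 1) (n : ℕ) :
    if ω = -1 then
      (PowerSeries.coeff (R := ℂ) n)
        ((∏ d ∈ Finset.Icc 1 n,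
          ∏ᶠ p ∈ {p : Polynomial F | p.Monic ∧ Irreducible p ∧ p.natDegree = d ∧ p.coeff 0 ≠ 0},
            (1 + PowerSeries.C (R := ℂ) (ω ^ (r p).val) * (X : PowerSeries ℂ) ^ d)) *
          (1 - X ^ 2)) =
      (PowerSeries.coeff (R := ℂ) n) (1 - PowerSeries.C (R := ℂ) (q : ℂ) * X ^ 2)
    else
      (PowerSeries.coeff (R := ℂ) n)
        (∏ d ∈ Finset.Icc 1 n,
          ∏ᶠ p ∈ {p : Polynomial F | p.Monic ∧ Irreducible p ∧ p.natDegree = d ∧ p.coeff 0 ≠ 0},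
            (1 + PowerSeries.C (R := ℂ) (ω ^ (r p).val) * (X : PowerSeries ℂ) ^ d)) =
      (PowerSeries.coeff (R := ℂ) n) 1 := by
  subst hq
  have hcard : 2 < Fintype.card F := by
    have := Fintype.one_lt_card (α := F)
    by_contra h
    rw [show Fintype.card F = 2 by omega, pow_one] at hω
    exact hω1 hω
  have hζ0 := ne_zero_of_forall_eq_pow hζ hcard
  obtain ⟨χ, hχζ⟩ := MulChar.exists_apply_eq hζ hζ0 hω
  have hχ : χ ≠ 1 := by rwa [ne_eq, MulChar.eq_one_iff_apply_eq_one hζ hζ0, hχζ]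
  rw [Polynomial.prod_Icc_finprod_eq_prod_monicIrreducibleOfDegreeLE _ χ.polyChar
    (fun p h1 h2 h3 => by rw [MulChar.polyChar_apply, ← hr p h1 h2 h3, map_pow, hχζ])
    (fun p h => by rw [MulChar.polyChar_apply, h, mul_zero, MulChar.map_zero])]
  set I := Ideal.span {(X : PowerSeries ℂ) ^ (n + 1)}
  have hX : Ideal.Quotient.mk I X ^ (n + 1) = 0 := by
    rw [← map_pow, Ideal.Quotient.eq_zero_iff_mem]
    exact Ideal.mem_span_singleton_self _
  split_ifs with hω'
  · have hχ2 : χ ^ 2 = 1 := by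
      rw [MulChar.eq_one_iff_apply_eq_one hζ hζ0, MulChar.pow_apply' _ two_ne_zero, hχζ, hω']
      norm_num
    refine coeff_eq_of_mk_eq ?_
    simpa using χ.prod_one_add_polyChar_mul_one_sub_sq ((Ideal.Quotient.mk I).comp C) hχ hχ2 hX
  · have hχ2 : χ ^ 2 ≠ 1 := by
      rw [ne_eq, MulChar.eq_one_iff_apply_eq_one hζ hζ0, MulChar.pow_apply' _ two_ne_zero, hχζ,
        sq_eq_one_iff]
      exact not_or.mpr ⟨hω1, hω'⟩
    refine coeff_eq_of_mk_eq ?_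
    simpa using χ.prod_one_add_polyChar_eq_one ((Ideal.Quotient.mk I).comp C) hχ2 hX
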